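/- If H is a strongly primary monoid with Λ(H) = ∞ and nonempty conductor (H : Ĥ) ≠ ∅, then H is globally tame. -/

import Mathlib

open Pointwise

section MonoidDefs

variable {G : Type*} [CommGroup G]

/-- `x` is a unit of the submonoid `H`. -/
def IsHUnit (H : Submonoid G) (x : G) : Prop := x ∈ H ∧ x⁻¹ ∈ H

/-- The set of non-units of `H`. -/
def nonUnits (H : Submonoid G) : Set G := {x | x ∈ H ∧ x⁻¹ ∉ H}

/-- `u` is an atom (irreducible element) of `H`. -/
def IsHAtom (H : Submonoid G) (u : G) : Prop :=
  u ∈ H ∧ ¬ IsHUnit H u ∧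
    ∀ a b : G, a ∈ H → b ∈ H → u = a * b → IsHUnit H a ∨ IsHUnit H b

/-- `G` is the quotient group of `H`. -/
def IsQuotientGroup (H : Submonoid G) : Prop :=
  ∀ g : G, ∃ a ∈ H, ∃ b ∈ H, g = a / b

/-- `H` is a primary monoid. -/
def IsPrimaryMonoid (H : Submonoid G) : Prop :=
  (nonUnits H).Nonempty ∧
    ∀ a ∈ nonUnits H, ∀ b ∈ nonUnits H, ∃ n : ℕ, 0 < n ∧ b ^ n ∈ a • (H : Set G)

/-- `H` is a strongly primary monoid. -/
def IsStronglyPrimary (H : Submonoid G) : Prop :=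
  (nonUnits H).Nonempty ∧
    ∀ a ∈ nonUnits H, ∃ n : ℕ, 0 < n ∧ nonUnits H ^ n ⊆ a • (H : Set G)

/-- `x` and `y` are associated in `H`. -/
def HAssoc (H : Submonoid G) (x y : G) : Prop := IsHUnit H (x / y)

/-- The set of lengths of `a`: all `k` such that `a` is a product of `k` atoms
(up to a unit of `H`). -/
def lengthSet (H : Submonoid G) (a : G) : Set ℕ :=
  {k | ∃ s : Multiset G, Multiset.card s = k ∧ (∀ v ∈ s, IsHAtom H v) ∧ HAssoc H a s.prod}

/-- `Λ(S)`, the supremum of the minimal factorization lengths of elements of `S`. -/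
noncomputable def Lambda (H : Submonoid G) (S : Set G) : ℕ∞ :=
  ⨆ (a : G) (_ : a ∈ S) (_ : (lengthSet H a).Nonempty), ((sInf (lengthSet H a) : ℕ) : ℕ∞)

/-- `ρ_k(H)`, the supremum of `sup L(a)` over all `a` with `k ∈ L(a)`. -/
noncomputable def rho (H : Submonoid G) (k : ℕ∞) : ℕ∞ :=
  ⨆ (a : G) (_ : a ∈ H) (_ : ∃ n ∈ lengthSet H a, (n : ℕ∞) = k),
    ⨆ (n : ℕ) (_ : n ∈ lengthSet H a), (n : ℕ∞)

/-- The elasticity `ρ(H) = sup { m/n : m, n ∈ L(a), a ∈ H }`. -/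
noncomputable def elasticity (H : Submonoid G) : ENNReal :=
  ⨆ (a : G) (_ : a ∈ H) (m : ℕ) (_ : m ∈ lengthSet H a) (n : ℕ) (_ : n ∈ lengthSet H a),
    (m : ENNReal) / (n : ENNReal)

/-- `z` is a factorization of `a`: a multiset of atoms whose product is associated to `a`. -/
def IsFactorization (H : Submonoid G) (a : G) (z : Multiset G) : Prop :=
  (∀ v ∈ z, IsHAtom H v) ∧ HAssoc H a z.prod

/-- The distance between two factorizations: cancel a (maximal) common part (up to
associates) and take the maximum of the lengths of the remaining parts. -/
noncomputable def fdist (H : Submonoid G) (z z' : Multiset G) : ℕ :=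
  sInf {N : ℕ | ∃ x x' v w : Multiset G, z = x + v ∧ z' = x' + w ∧
    Multiset.Rel (HAssoc H) x x' ∧ max (Multiset.card v) (Multiset.card w) ≤ N}

/-- `N` is a tame bound for the atom `u`: for every multiple `a` of `u` and every
factorization `z` of `a` there is a factorization `z'` of `a` containing `u`
with `d(z, z') ≤ N`. -/
def TameBound (H : Submonoid G) (u : G) (N : ℕ) : Prop :=
  ∀ a ∈ H, (∃ b ∈ H, a = u * b) → ∀ z : Multiset G, IsFactorization H a z →
    ∃ z' : Multiset G, IsFactorization H a z' ∧ (∃ v ∈ z', HAssoc H v u) ∧ fdist H z z' ≤ N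

/-- `H` is locally tame: `t(u) < ∞` for every atom `u`. -/
def LocallyTame (H : Submonoid G) : Prop :=
  ∀ u : G, IsHAtom H u → ∃ N : ℕ, TameBound H u N

/-- `H` is globally tame: `sup { t(u) : u an atom } < ∞`. -/
def GloballyTame (H : Submonoid G) : Prop :=
  ∃ N : ℕ, ∀ u : G, IsHAtom H u → TameBound H u N

/-- The local tame degree `t(u)` of `u`. -/
noncomputable def tameDeg (H : Submonoid G) (u : G) : ℕ∞ :=
  sInf {N : ℕ∞ | ∃ n : ℕ, TameBound H u n ∧ N = (n : ℕ∞)}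

/-- `N` is an omega bound for `a`: whenever `a` divides a product of elements of `H`,
it divides a subproduct with at most `N` factors. -/
def OmegaBound (H : Submonoid G) (a : G) (N : ℕ) : Prop :=
  ∀ s : Multiset G, (∀ x ∈ s, x ∈ H) → (∃ c ∈ H, s.prod = a * c) →
    ∃ t : Multiset G, t ≤ s ∧ Multiset.card t ≤ N ∧ ∃ c ∈ H, t.prod = a * c

/-- The omega invariant `ω(a)`. -/
noncomputable def omegaDeg (H : Submonoid G) (a : G) : ℕ∞ :=
  sInf {N : ℕ∞ | ∃ n : ℕ, OmegaBound H a n ∧ N = (n : ℕ∞)}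

/-- `M(x)`: the smallest `n ≥ 1` with `mⁿ ⊆ xH`. -/
noncomputable def Mdeg (H : Submonoid G) (x : G) : ℕ :=
  sInf {n : ℕ | 0 < n ∧ nonUnits H ^ n ⊆ x • (H : Set G)}

/-- The complete integral closure `Ĥ` of `H` (inside the quotient group). -/
def hatH (H : Submonoid G) : Set G := {x | ∃ c ∈ H, ∀ n : ℕ, c * x ^ n ∈ H}

/-- The set of non-units of `Ĥ`. -/
def hatNonUnits (H : Submonoid G) : Set G := {x | x ∈ hatH H ∧ x⁻¹ ∉ hatH H}

/-- The root closure `H̃` of `H`. -/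
def tildeH (H : Submonoid G) : Set G := {x | ∃ n : ℕ, 0 < n ∧ x ^ n ∈ H}

/-- The set of non-units of `H̃`. -/
def tildeNonUnits (H : Submonoid G) : Set G := {x | x ∈ tildeH H ∧ x⁻¹ ∉ tildeH H}

/-- The seminormal closure `H'` of `H`. -/
def seminormalClosure (H : Submonoid G) : Set G :=
  {x | ∃ N : ℕ, ∀ n : ℕ, N ≤ n → x ^ n ∈ H}

/-- The conductor `(H : Ĥ)`. -/
def conductorH (H : Submonoid G) : Set G := {z | ∀ x ∈ hatH H, z * x ∈ H}

/-- `Ĥ` is a primary monoid. -/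
def HatPrimary (H : Submonoid G) : Prop :=
  (hatNonUnits H).Nonempty ∧
    ∀ a ∈ hatNonUnits H, ∀ b ∈ hatNonUnits H,
      ∃ n : ℕ, 0 < n ∧ ∃ c ∈ hatH H, b ^ n = a * c

/-- `Ĥ` is a valuation monoid. -/
def HatValuation (H : Submonoid G) : Prop :=
  ∀ a ∈ hatH H, ∀ b ∈ hatH H,
    (∃ c ∈ hatH H, b = a * c) ∨ (∃ c ∈ hatH H, a = b * c)

/-- `H` is atomic. -/
def Atomic (H : Submonoid G) : Prop :=
  ∀ a ∈ nonUnits H, ∃ s : Multiset G, (∀ v ∈ s, IsHAtom H v) ∧ a = s.prod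

/-- `H` is a discrete valuation monoid, i.e. `H_red ≅ (ℕ₀, +)`. -/
def IsDiscreteValuationMonoid (H : Submonoid G) : Prop :=
  ∃ p ∈ H, ¬ IsHUnit H p ∧ ∀ a ∈ H, ∃ n : ℕ, ∃ ε : G, IsHUnit H ε ∧ a = ε * p ^ n

end MonoidDefs

/-!
Fix a non-unit `f` in the conductor and `M` with `mᴹ ⊆ fH`. Every element of `H` not divisible
by `f` has a factorization of length at most `M`, and `Λ(H) = ∞` forces the minimal lengths of the
powers `fᵀ` to be unbounded.

The crux is that every atom `u` divides `f³`. Otherwise `f²/u ∉ Ĥ`, so `uⁿ ∤ f^(2n+C)` for some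
`n`; comparing the largest power of `f` dividing `uⁿ` with the smallest power of `f` divisible by
`uⁿ` writes `f^D = h₁h₂` with `f ∤ h₁, h₂` and `D` as large as we like. Thus `f^D` has a
factorization `w₁ ⋯ w_t` with `2t < D`. Since `f` lies in the conductor, `f^(2k+1) ∤ wᵏ` for
every atom `w`, so pulling the largest `f`-powers out of `w₁ᵏ ⋯ w_tᵏ` leaves elements `f^(E_k)`
with factorizations of length at most `tM`, where `E_k → ∞` in steps of at most `D`. Hence every
`fᵀ` has a factorization of bounded length, a contradiction.

So every atom divides every product of `3M` non-units. Given a factorization `z` of a multiple of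
an atom `u`, some at most `3M` atoms of `z` have a product divisible by `u`; refactoring that
product through `u` yields a factorization containing `u` at distance at most `(3M)²` from `z`.
-/

open Multiset

theorem Multiset.exists_le_card_eq {α : Type*} {s : Multiset α} {n : ℕ} (hn : n ≤ card s) :
    ∃ t ≤ s, card t = n :=
  have : 0 < card (s.powersetCard n) := by rw [card_powersetCard]; exact Nat.choose_pos hn
  (card_pos_iff_exists_mem.1 this).imp fun _ ht => mem_powersetCard.1 ht

theorem Multiset.prod_map_pow_eq_pow_sum {ι M : Type*} [CommMonoid M] (s : Multiset ι) (g : ι → ℕ)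
    (a : M) : (s.map fun i => a ^ g i).prod = a ^ (s.map g).sum := by
  induction s using Multiset.induction_on with
  | empty => simp
  | cons i s ih => simp [ih, pow_add]

theorem Nat.exists_le_le_add_of_step_le {E : ℕ → ℕ} {D : ℕ} (h0 : E 0 = 0) (hle : ∀ k, k ≤ E k)
    (hstep : ∀ k, E (k + 1) ≤ E k + D) (T : ℕ) : ∃ k, E k ≤ T ∧ T ≤ E k + D := by
  classical
  have hex : ∃ k, T < E k := ⟨T + 1, (Nat.lt_succ_self T).trans_le (hle _)⟩
  obtain ⟨k, hk⟩ : ∃ k, Nat.find hex = k + 1 :=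
    Nat.exists_eq_succ_of_ne_zero fun h => by simpa [h, h0] using Nat.find_spec hex
  refine ⟨k, not_lt.1 (Nat.find_min hex (by omega)), ?_⟩
  have := Nat.find_spec hex
  rw [hk] at this
  have := hstep k
  omega

section Monoid

variable {G : Type*} [CommGroup G] {H : Submonoid G} {a b c f u x y : G} {M N : ℕ}

namespace IsHUnit

lemma one : IsHUnit H 1 := ⟨H.one_mem, by simp [H.one_mem]⟩

lemma mul (ha : IsHUnit H a) (hb : IsHUnit H b) : IsHUnit H (a * b) :=
  ⟨H.mul_mem ha.1 hb.1, by rw [mul_inv]; exact H.mul_mem ha.2 hb.2⟩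

lemma inv (ha : IsHUnit H a) : IsHUnit H a⁻¹ := ⟨ha.2, by rw [inv_inv]; exact ha.1⟩

lemma pow (ha : IsHUnit H a) (n : ℕ) : IsHUnit H (a ^ n) :=
  ⟨H.pow_mem ha.1 n, by rw [← inv_pow]; exact H.pow_mem ha.2 n⟩

end IsHUnit

lemma mem_nonUnits_of_not_isHUnit (ha : a ∈ H) (hu : ¬ IsHUnit H a) : a ∈ nonUnits H :=
  ⟨ha, fun h => hu ⟨ha, h⟩⟩

lemma mul_mem_nonUnits (ha : a ∈ nonUnits H) (hb : b ∈ H) : a * b ∈ nonUnits H :=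
  ⟨H.mul_mem ha.1 hb, fun h => ha.2 (by
    rw [show a⁻¹ = b * (a * b)⁻¹ by rw [mul_inv, mul_left_comm, mul_inv_cancel, mul_one]]
    exact H.mul_mem hb h)⟩

lemma pow_mem_nonUnits (ha : a ∈ nonUnits H) {n : ℕ} (hn : n ≠ 0) : a ^ n ∈ nonUnits H := by
  obtain ⟨k, rfl⟩ := Nat.exists_eq_succ_of_ne_zero hn
  rw [pow_succ']
  exact mul_mem_nonUnits ha (H.pow_mem ha.1 k)

lemma mul_ne_one_of_mem_nonUnits (ha : a ∈ nonUnits H) (hb : b ∈ H) : a * b ≠ 1 := fun h =>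
  ha.2 (inv_eq_of_mul_eq_one_right h ▸ hb)

lemma IsHAtom.mem_nonUnits (hu : IsHAtom H u) : u ∈ nonUnits H :=
  mem_nonUnits_of_not_isHUnit hu.1 hu.2.1

lemma exists_mul_of_not_isHAtom (hx : x ∈ nonUnits H) (hna : ¬ IsHAtom H x) :
    ∃ b ∈ nonUnits H, ∃ c ∈ nonUnits H, x = b * c := by
  simp only [IsHAtom, not_and, not_forall, not_or] at hna
  obtain ⟨b, c, hb, hc, rfl, hbu, hcu⟩ := hna hx.1 fun h => hx.2 h.2
  exact ⟨b, mem_nonUnits_of_not_isHUnit hb hbu, c, mem_nonUnits_of_not_isHUnit hc hcu, rfl⟩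

def HDvd (H : Submonoid G) (a x : G) : Prop := ∃ h ∈ H, x = a * h

lemma hDvd_iff_div_mem : HDvd H a x ↔ x / a ∈ H :=
  ⟨fun ⟨h, hh, e⟩ => by rwa [e, mul_div_cancel_left],
    fun h => ⟨x / a, h, (mul_div_cancel a x).symm⟩⟩

lemma hDvd_mul_right (a : G) (hb : b ∈ H) : HDvd H a (a * b) := ⟨b, hb, rfl⟩

lemma hDvd_pow_of_le (hf : f ∈ H) {m n : ℕ} (h : m ≤ n) : HDvd H (f ^ m) (f ^ n) :=
  ⟨f ^ (n - m), H.pow_mem hf _, by rw [← pow_add, Nat.add_sub_cancel' h]⟩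

namespace HDvd

lemma refl (a : G) : HDvd H a a := ⟨1, H.one_mem, (mul_one a).symm⟩

lemma trans (h₁ : HDvd H a b) (h₂ : HDvd H b c) : HDvd H a c := by
  obtain ⟨h, hh, rfl⟩ := h₁
  obtain ⟨k, hk, rfl⟩ := h₂
  exact ⟨h * k, H.mul_mem hh hk, mul_assoc a h k⟩

lemma mul_right (h : HDvd H a b) (hc : c ∈ H) : HDvd H a (b * c) := h.trans ⟨c, hc, rfl⟩

lemma pow (h : HDvd H a b) (n : ℕ) : HDvd H (a ^ n) (b ^ n) := by
  obtain ⟨h, hh, rfl⟩ := h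
  exact ⟨h ^ n, H.pow_mem hh n, mul_pow a h n⟩

end HDvd

lemma le_of_pow_hDvd_pow (hf : f ∈ nonUnits H) {t n : ℕ} (h : HDvd H (f ^ t) (f ^ n)) : t ≤ n := by
  by_contra! htn
  obtain ⟨k, hk, e⟩ := h
  refine mul_ne_one_of_mem_nonUnits (pow_mem_nonUnits hf (Nat.sub_ne_zero_of_lt htn)) hk
    (mul_left_cancel (a := f ^ n) ?_)
  rw [← mul_assoc, ← pow_add, Nat.add_sub_cancel' htn.le, ← e, mul_one]

namespace HAssoc

lemma refl (x : G) : HAssoc H x x := by rw [HAssoc, div_self']; exact IsHUnit.one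

lemma symm (h : HAssoc H x y) : HAssoc H y x := by rw [HAssoc, ← inv_div]; exact IsHUnit.inv h

lemma trans (h₁ : HAssoc H x y) (h₂ : HAssoc H y c) : HAssoc H x c := by
  rw [HAssoc, ← div_mul_div_cancel x y c]; exact IsHUnit.mul h₁ h₂

lemma mul {x' y' : G} (h₁ : HAssoc H x y) (h₂ : HAssoc H x' y') : HAssoc H (x * x') (y * y') := by
  rw [HAssoc, mul_div_mul_comm]; exact IsHUnit.mul h₁ h₂

lemma pow (h : HAssoc H x y) (n : ℕ) : HAssoc H (x ^ n) (y ^ n) := by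
  rw [HAssoc, ← div_pow]; exact IsHUnit.pow h n

lemma div_right (h : HAssoc H x y) (c : G) : HAssoc H (x / c) (y / c) := by
  rwa [HAssoc, div_div_div_cancel_right]

lemma hDvd (h : HAssoc H x y) : HDvd H y x := ⟨x / y, h.1, (mul_div_cancel y x).symm⟩

end HAssoc

namespace IsFactorization

variable {z w : Multiset G}

lemma of_isHUnit (hx : IsHUnit H x) : IsFactorization H x 0 :=
  ⟨by simp, by simpa [HAssoc] using hx⟩

lemma prod (hz : ∀ v ∈ z, IsHAtom H v) : IsFactorization H z.prod z := ⟨hz, HAssoc.refl _⟩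

lemma add (hz : IsFactorization H x z) (hw : IsFactorization H y w) :
    IsFactorization H (x * y) (z + w) := by
  refine ⟨fun v hv => ?_, by rw [prod_add]; exact hz.2.mul hw.2⟩
  rcases mem_add.1 hv with hv | hv
  exacts [hz.1 v hv, hw.1 v hv]

lemma of_hAssoc (hz : IsFactorization H x z) (h : HAssoc H y x) : IsFactorization H y z :=
  ⟨hz.1, h.trans hz.2⟩

end IsFactorization

/-- `min L(x) ≤ B`. -/
def HasLengthLE (H : Submonoid G) (x : G) (B : ℕ) : Prop :=
  ∃ z, IsFactorization H x z ∧ card z ≤ B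

namespace HasLengthLE

variable {B B' : ℕ}

lemma one : HasLengthLE H 1 0 := ⟨0, IsFactorization.of_isHUnit IsHUnit.one, le_rfl⟩

lemma mono (h : HasLengthLE H x B) (hB : B ≤ B') : HasLengthLE H x B' :=
  h.imp fun _ hz => ⟨hz.1, hz.2.trans hB⟩

lemma mul (hx : HasLengthLE H x B) (hy : HasLengthLE H y B') : HasLengthLE H (x * y) (B + B') := by
  obtain ⟨z, hz, hzB⟩ := hx
  obtain ⟨w, hw, hwB⟩ := hy
  exact ⟨z + w, hz.add hw, by rw [card_add]; omega⟩

lemma of_hAssoc (h : HasLengthLE H x B) (hyx : HAssoc H y x) : HasLengthLE H y B :=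
  h.imp fun _ hz => ⟨hz.1.of_hAssoc hyx, hz.2⟩

lemma pow (h : HasLengthLE H x B) : ∀ n : ℕ, HasLengthLE H (x ^ n) (n * B)
  | 0 => by simpa using one
  | n + 1 => by rw [pow_succ, Nat.succ_mul]; exact (h.pow n).mul h

lemma multiset_prod {ι : Type*} {s : Multiset ι} {F : ι → G}
    (h : ∀ i ∈ s, HasLengthLE H (F i) B) : HasLengthLE H (s.map F).prod (card s * B) := by
  induction s using Multiset.induction_on with
  | empty => simpa using one
  | cons i s ih =>
    rw [map_cons, prod_cons, card_cons, Nat.succ_mul, add_comm]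
    exact (h i (mem_cons_self i s)).mul (ih fun j hj => h j (mem_cons_of_mem hj))

end HasLengthLE

lemma exists_not_hasLengthLE_of_lambda_eq_top {S : Set G} (hL : Lambda H S = ⊤) (C : ℕ) :
    ∃ a ∈ S, ¬ HasLengthLE H a C := by
  by_contra! h
  have hle : Lambda H S ≤ C := iSup_le fun a => iSup_le fun ha => iSup_le fun _ => by
    obtain ⟨z, hz, hzC⟩ := h a ha
    exact_mod_cast (Nat.sInf_le (show card z ∈ lengthSet H a from ⟨z, rfl, hz⟩)).trans hzC
  rw [hL, top_le_iff] at hle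
  exact ENat.natCast_ne_top C hle

/-- `mᴺ ⊆ aH`. -/
def DvdsLongProducts (H : Submonoid G) (a : G) (N : ℕ) : Prop :=
  ∀ s : Multiset G, (∀ x ∈ s, x ∈ nonUnits H) → N ≤ card s → HDvd H a s.prod

lemma dvdsLongProducts_of_isHUnit (ha : IsHUnit H a) : DvdsLongProducts H a 0 := fun s hs _ =>
  ⟨a⁻¹ * s.prod, H.mul_mem ha.2 (H.multiset_prod_mem s fun x hx => (hs x hx).1),
    (mul_inv_cancel_left a _).symm⟩

lemma dvdsLongProducts_of_pow_subset (h : nonUnits H ^ N ⊆ a • (H : Set G)) :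
    DvdsLongProducts H a N := by
  classical
  intro s hs hN
  obtain ⟨t, hts, rfl⟩ := exists_le_card_eq hN
  have ht : t.prod ∈ nonUnits H ^ card t := by
    simpa using Set.multiset_prod_mem_multiset_prod t (fun _ => nonUnits H) id
      fun x hx => hs x (mem_of_le hts hx)
  obtain ⟨h, hh, e⟩ := h ht
  rw [← add_tsub_cancel_of_le hts, prod_add]
  exact HDvd.mul_right ⟨h, hh, e.symm⟩
    (H.multiset_prod_mem _ fun x hx => (hs x (mem_of_le tsub_le_self hx)).1)

namespace DvdsLongProducts

lemma of_hDvd (h : DvdsLongProducts H b N) (hab : HDvd H a b) : DvdsLongProducts H a N :=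
  fun s hs hN => hab.trans (h s hs hN)

lemma mul (ha : DvdsLongProducts H a M) (hb : DvdsLongProducts H b N) :
    DvdsLongProducts H (a * b) (M + N) := by
  classical
  intro s hs hMN
  obtain ⟨t, hts, htM⟩ := exists_le_card_eq (show M ≤ card s by omega)
  obtain ⟨h, hh, e⟩ := ha t (fun x hx => hs x (mem_of_le hts hx)) htM.ge
  obtain ⟨k, hk, e'⟩ := hb (s - t) (fun x hx => hs x (mem_of_le tsub_le_self hx))
    (by rw [card_sub hts]; omega)
  refine ⟨h * k, H.mul_mem hh hk, ?_⟩
  rw [← add_tsub_cancel_of_le hts, prod_add, e, e', mul_mul_mul_comm]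

lemma multiset_prod {s : Multiset G} (h : ∀ x ∈ s, DvdsLongProducts H x N) :
    DvdsLongProducts H s.prod (card s * N) := by
  induction s using Multiset.induction_on with
  | empty => simpa using dvdsLongProducts_of_isHUnit IsHUnit.one
  | cons x s ih =>
    rw [prod_cons, card_cons, Nat.succ_mul, add_comm]
    exact (h x (mem_cons_self x s)).mul (ih fun y hy => h y (mem_cons_of_mem hy))

lemma pow (h : DvdsLongProducts H a N) (n : ℕ) : DvdsLongProducts H (a ^ n) (n * N) := by
  simpa using multiset_prod (s := replicate n a) fun x hx => eq_of_mem_replicate hx ▸ h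

lemma hDvd_pow (h : DvdsLongProducts H a N) (hf : f ∈ nonUnits H) : HDvd H a (f ^ N) := by
  simpa using h (replicate N f) (fun x hx => eq_of_mem_replicate hx ▸ hf) (by simp)

lemma card_le (h : DvdsLongProducts H a N) {s : Multiset G} (hs : ∀ x ∈ s, x ∈ nonUnits H)
    (hsa : s.prod = a) : card s ≤ N := by
  by_contra! hN
  obtain ⟨x, hx⟩ := card_pos_iff_exists_mem.1 (show 0 < card s by omega)
  obtain ⟨t, rfl⟩ := exists_cons_of_mem hx
  rw [card_cons] at hN
  obtain ⟨h, hh, e⟩ := h t (fun y hy => hs y (mem_cons_of_mem hy)) (by omega)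
  rw [prod_cons, e] at hsa
  refine mul_ne_one_of_mem_nonUnits (hs x (mem_cons_self x t)) hh (mul_left_cancel (a := a) ?_)
  rw [mul_left_comm, hsa, mul_one]

end DvdsLongProducts

namespace IsFactorization

variable {z : Multiset G}

lemma card_le (hz : IsFactorization H x z) (h : DvdsLongProducts H x N) : card z ≤ N :=
  (h.of_hDvd hz.2.hDvd).card_le (fun v hv => (hz.1 v hv).mem_nonUnits) rfl

lemma card_lt_of_not_hDvd (hz : IsFactorization H x z) (hf : DvdsLongProducts H f N)
    (hx : ¬ HDvd H f x) : card z < N :=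
  not_le.1 fun hN => hx ((hf z (fun v hv => (hz.1 v hv).mem_nonUnits) hN).trans hz.2.hDvd)

end IsFactorization

lemma exists_isFactorization_of_forall_card_le (N : ℕ) : ∀ x ∈ H,
    (∀ s : Multiset G, (∀ y ∈ s, y ∈ nonUnits H) → s.prod = x → card s ≤ N) →
      ∃ z, IsFactorization H x z := by
  induction N with
  | zero =>
    intro x hx hN
    by_cases hu : IsHUnit H x
    · exact ⟨0, IsFactorization.of_isHUnit hu⟩
    · simpa using hN {x} (by simpa using mem_nonUnits_of_not_isHUnit hx hu) (prod_singleton x)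
  | succ N ih =>
    intro x hx hN
    by_cases hu : IsHUnit H x
    · exact ⟨0, IsFactorization.of_isHUnit hu⟩
    by_cases ha : IsHAtom H x
    · exact ⟨{x}, by simpa using IsFactorization.prod (z := {x}) (by simpa using ha)⟩
    obtain ⟨b, hb, c, hc, rfl⟩ := exists_mul_of_not_isHAtom (mem_nonUnits_of_not_isHUnit hx hu) ha
    have bound {d e : G} (hd : d ∈ nonUnits H) (hde : d * e = b * c) (s : Multiset G)
        (hs : ∀ y ∈ s, y ∈ nonUnits H) (hse : s.prod = e) : card s ≤ N := by
      have := hN (d ::ₘ s) (by simpa [hd] using hs) (by rw [prod_cons, hse, hde])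
      simpa using this
    obtain ⟨zb, hzb⟩ := ih b hb.1 (bound hc (mul_comm c b))
    obtain ⟨zc, hzc⟩ := ih c hc.1 (bound hb rfl)
    exact ⟨zb + zc, hzb.add hzc⟩

/-- The largest `t` with `fᵗ ∣ x` in `H` (junk value `0` if there is no largest one). -/
noncomputable def maxPowDvd (H : Submonoid G) (f x : G) : ℕ := sSup {t | HDvd H (f ^ t) x}

namespace IsStronglyPrimary

lemma exists_dvdsLongProducts (hsp : IsStronglyPrimary H) (hx : x ∈ H) :
    ∃ N, DvdsLongProducts H x N := by
  by_cases hu : IsHUnit H x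
  · exact ⟨0, dvdsLongProducts_of_isHUnit hu⟩
  · obtain ⟨N, -, hN⟩ := hsp.2 x (mem_nonUnits_of_not_isHUnit hx hu)
    exact ⟨N, dvdsLongProducts_of_pow_subset hN⟩

lemma exists_isFactorization (hsp : IsStronglyPrimary H) (hx : x ∈ H) :
    ∃ z, IsFactorization H x z := by
  obtain ⟨N, hN⟩ := hsp.exists_dvdsLongProducts hx
  exact exists_isFactorization_of_forall_card_le N x hx fun s hs e => hN.card_le hs e

lemma hasLengthLE_of_not_hDvd (hsp : IsStronglyPrimary H) (hf : DvdsLongProducts H f M)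
    (hx : x ∈ H) (hnd : ¬ HDvd H f x) : HasLengthLE H x M := by
  obtain ⟨z, hz⟩ := hsp.exists_isFactorization hx
  exact ⟨z, hz, (hz.card_lt_of_not_hDvd hf hnd).le⟩

lemma bddAbove_pow_hDvd (hsp : IsStronglyPrimary H) (hf : f ∈ nonUnits H) (hx : x ∈ H) :
    BddAbove {t | HDvd H (f ^ t) x} := by
  obtain ⟨N, hN⟩ := hsp.exists_dvdsLongProducts hx
  exact ⟨N, fun t ht => le_of_pow_hDvd_pow hf (HDvd.trans ht (hN.hDvd_pow hf))⟩

lemma le_maxPowDvd (hsp : IsStronglyPrimary H) (hf : f ∈ nonUnits H) (hx : x ∈ H) {t : ℕ}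
    (ht : HDvd H (f ^ t) x) : t ≤ maxPowDvd H f x :=
  le_csSup (hsp.bddAbove_pow_hDvd hf hx) ht

lemma pow_maxPowDvd_hDvd (hsp : IsStronglyPrimary H) (hf : f ∈ nonUnits H) (hx : x ∈ H) :
    HDvd H (f ^ maxPowDvd H f x) x :=
  Nat.sSup_mem (s := {t | HDvd H (f ^ t) x}) ⟨0, x, hx, by rw [pow_zero, one_mul]⟩
    (hsp.bddAbove_pow_hDvd hf hx)

lemma exists_eq_pow_maxPowDvd_mul (hsp : IsStronglyPrimary H) (hf : f ∈ nonUnits H) (hx : x ∈ H) :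
    ∃ h ∈ H, x = f ^ maxPowDvd H f x * h ∧ ¬ HDvd H f h := by
  obtain ⟨h, hh, e⟩ := hsp.pow_maxPowDvd_hDvd hf hx
  refine ⟨h, hh, e, ?_⟩
  rintro ⟨k, hk, rfl⟩
  have := hsp.le_maxPowDvd hf hx ⟨k, hk, by rw [e, pow_succ, mul_assoc]⟩
  omega

lemma maxPowDvd_mono (hsp : IsStronglyPrimary H) (hf : f ∈ nonUnits H) (hx : x ∈ H) (hy : y ∈ H)
    (hxy : HDvd H x y) : maxPowDvd H f x ≤ maxPowDvd H f y :=
  hsp.le_maxPowDvd hf hy ((hsp.pow_maxPowDvd_hDvd hf hx).trans hxy)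

lemma hasLengthLE_div_pow_maxPowDvd (hsp : IsStronglyPrimary H) (hf : f ∈ nonUnits H)
    (hM : DvdsLongProducts H f M) (hx : x ∈ H) :
    HasLengthLE H (x / f ^ maxPowDvd H f x) M := by
  obtain ⟨h, hh, e, hnd⟩ := hsp.exists_eq_pow_maxPowDvd_mul hf hx
  rw [show x / f ^ maxPowDvd H f x = h by nth_rw 1 [e]; exact mul_div_cancel_left _ _]
  exact hsp.hasLengthLE_of_not_hDvd hM hh hnd

end IsStronglyPrimary

lemma exists_mem_nonUnits_mem_conductorH (hm : (nonUnits H).Nonempty)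
    (hc : (conductorH H).Nonempty) : ∃ f ∈ nonUnits H, f ∈ conductorH H := by
  obtain ⟨a, ha⟩ := hm
  obtain ⟨f₀, hf₀⟩ := hc
  have hf₀H : f₀ ∈ H := by simpa using hf₀ 1 ⟨1, H.one_mem, fun _ => by simp⟩
  exact ⟨a * f₀, mul_mem_nonUnits ha hf₀H, fun x hx => by
    rw [mul_assoc]; exact H.mul_mem ha.1 (hf₀ x hx)⟩

lemma mem_hatH_of_pow_mem {c : G} {k : ℕ} (hk : 0 < k) (hc : c ∈ H)
    (hcj : ∀ j < k, c * y ^ j ∈ H) (hy : y ^ k ∈ H) : y ∈ hatH H :=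
  ⟨c, hc, fun n => by
    rw [← Nat.div_add_mod n k, pow_add, pow_mul, mul_left_comm]
    exact H.mul_mem (H.pow_mem hy _) (hcj _ (Nat.mod_lt n hk))⟩

lemma IsHAtom.not_hDvd_pow (hu : IsHAtom H u) (hf : f ∈ nonUnits H) (hfc : f ∈ conductorH H)
    (k : ℕ) : ¬ HDvd H (f ^ (2 * k + 1)) (u ^ k) := by
  intro hdvd
  suffices HDvd H (u ^ k) (f ^ k) by
    have := le_of_pow_hDvd_pow hf (hdvd.trans this)
    omega
  obtain rfl | hk := k.eq_zero_or_pos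
  · simpa using HDvd.refl (H := H) (1 : G)
  rw [hDvd_iff_div_mem] at hdvd
  -- `(u / f²)ᵏ = f · (uᵏ / f^(2k+1)) ∈ H`, so `u / f² ∈ Ĥ` and the conductor gives `u / f ∈ H`;
  -- as `u` is an atom, `u / f` is then a unit.
  have hy : u / f ^ 2 ∈ hatH H := by
    refine mem_hatH_of_pow_mem hk (H.pow_mem hf.1 (2 * k)) (fun j hj => ?_) ?_
    · have : f ^ (2 * k) = f ^ (2 * (k - j)) * f ^ (2 * j) := by
        rw [← pow_add, ← mul_add, Nat.sub_add_cancel hj.le]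
      rw [this, div_pow, ← pow_mul, mul_assoc, mul_div_cancel]
      exact H.mul_mem (H.pow_mem hf.1 _) (H.pow_mem hu.1 _)
    · rw [show (u / f ^ 2) ^ k = f * (u ^ k / f ^ (2 * k + 1)) by
        rw [div_pow, ← pow_mul, pow_succ, ← div_div, mul_div_cancel]]
      exact H.mul_mem hf.1 hdvd
  have huf : u / f ∈ H := by
    simpa [show f * (u / f ^ 2) = u / f by rw [pow_two, ← div_div, mul_div_cancel]] using hfc _ hy
  obtain hfu | hw := hu.2.2 f (u / f) hf.1 huf (mul_div_cancel f u).symm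
  · exact absurd hfu.2 hf.2
  · exact (HAssoc.symm (hw : HAssoc H u f)).hDvd.pow k

lemma IsHAtom.maxPowDvd_pow_le (hu : IsHAtom H u) (hsp : IsStronglyPrimary H)
    (hf : f ∈ nonUnits H) (hfc : f ∈ conductorH H) (k : ℕ) : maxPowDvd H f (u ^ k) ≤ 2 * k := by
  by_contra! h
  exact hu.not_hDvd_pow hf hfc k
    ((hDvd_pow_of_le hf.1 h).trans (hsp.pow_maxPowDvd_hDvd hf (H.pow_mem hu.1 k)))

lemma exists_not_hDvd_pow_of_not_hDvd_pow_three (hfc : f ∈ conductorH H)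
    (hu : ¬ HDvd H u (f ^ 3)) (C : ℕ) : ∃ n, ¬ HDvd H (u ^ n) (f ^ (2 * n + C)) := by
  by_contra! h
  simp only [hDvd_iff_div_mem] at h hu
  -- `f^C (f² / u)ⁿ ∈ H` for all `n`, so `f² / u ∈ Ĥ` and the conductor gives `f³ / u ∈ H`.
  have hy : f ^ 2 / u ∈ hatH H := ⟨f ^ C, by simpa using h 0, fun n => by
    rw [show f ^ C * (f ^ 2 / u) ^ n = f ^ (2 * n + C) / u ^ n by
      rw [div_pow, ← pow_mul, pow_add, mul_comm (f ^ (2 * n)), mul_div_assoc]]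
    exact h n⟩
  have h3 := hfc _ hy
  rw [mul_div_assoc', ← pow_succ'] at h3
  exact hu h3

lemma exists_min_pow_hDvd (hf : f ∈ nonUnits H) (hx : x ∈ H) (hxN : HDvd H x (f ^ N)) :
    ∃ K, ∃ h ∈ H, f ^ K = x * h ∧ ¬ HDvd H f h ∧ ∀ j, HDvd H x (f ^ j) → K ≤ j := by
  classical
  have hex : ∃ K, HDvd H x (f ^ K) := ⟨N, hxN⟩
  obtain ⟨h, hh, e⟩ := Nat.find_spec hex
  refine ⟨Nat.find hex, h, hh, e, ?_, fun j hj => Nat.find_min' hex hj⟩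
  rintro ⟨w, hw, rfl⟩
  obtain h0 | hpos := Nat.eq_zero_or_pos (Nat.find hex)
  · rw [h0, pow_zero] at e
    exact mul_ne_one_of_mem_nonUnits hf (H.mul_mem hx hw) (by rw [e, mul_left_comm])
  · refine Nat.find_min hex (Nat.sub_lt hpos one_pos) ⟨w, hw, mul_left_cancel (a := f) ?_⟩
    rw [← pow_succ', Nat.sub_one_add_one hpos.ne', e, mul_left_comm]

namespace IsStronglyPrimary

lemma exists_pow_eq_mul_not_hDvd (hsp : IsStronglyPrimary H) (hf : f ∈ nonUnits H)
    (hfc : f ∈ conductorH H) (hu : IsHAtom H u) (hnd : ¬ HDvd H u (f ^ 3)) (C : ℕ) :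
    ∃ D, C ≤ D ∧ ∃ h₁ ∈ H, ∃ h₂ ∈ H, f ^ D = h₁ * h₂ ∧ ¬ HDvd H f h₁ ∧ ¬ HDvd H f h₂ := by
  obtain ⟨n, hn⟩ := exists_not_hDvd_pow_of_not_hDvd_pow_three hfc hnd C
  have hx : u ^ n ∈ H := H.pow_mem hu.1 n
  obtain ⟨h₁, hh₁, e₁, hnd₁⟩ := hsp.exists_eq_pow_maxPowDvd_mul hf hx
  have hg := hu.maxPowDvd_pow_le hsp hf hfc n
  set g := maxPowDvd H f (u ^ n)
  obtain ⟨N, hN⟩ := hsp.exists_dvdsLongProducts hx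
  obtain ⟨K, h₂, hh₂, e₂, hnd₂, hmin⟩ := exists_min_pow_hDvd hf hx (hN.hDvd_pow hf)
  have hK : 2 * n + C < K :=
    not_le.1 fun h => hn (HDvd.trans ⟨h₂, hh₂, e₂⟩ (hDvd_pow_of_le hf.1 h))
  refine ⟨K - g, by omega, h₁, hh₁, h₂, hh₂, mul_left_cancel (a := f ^ g) ?_, hnd₁, hnd₂⟩
  rw [← pow_add, Nat.add_sub_cancel' (by omega), e₂, e₁, mul_assoc]

lemma exists_not_hasLengthLE_pow (hsp : IsStronglyPrimary H) (hL : Lambda H (H : Set G) = ⊤)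
    (hf : f ∈ nonUnits H) (hM : DvdsLongProducts H f M) (C : ℕ) :
    ∃ T, ¬ HasLengthLE H (f ^ T) C := by
  obtain ⟨a, ha, hlong⟩ := exists_not_hasLengthLE_of_lambda_eq_top hL (C + M)
  obtain ⟨h, hh, e, hnd⟩ := hsp.exists_eq_pow_maxPowDvd_mul hf ha
  exact ⟨maxPowDvd H f a, fun hT => hlong (by
    rw [e]; exact hT.mul (hsp.hasLengthLE_of_not_hDvd hM hh hnd))⟩

lemma hasLengthLE_prod_pow_div (hsp : IsStronglyPrimary H) (hf : f ∈ nonUnits H)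
    (hM : DvdsLongProducts H f M) {z : Multiset G} (hz : ∀ w ∈ z, w ∈ H) (k : ℕ) :
    HasLengthLE H (z.prod ^ k / f ^ (z.map fun w => maxPowDvd H f (w ^ k)).sum) (card z * M) := by
  have := HasLengthLE.multiset_prod (s := z) (F := fun w => w ^ k / f ^ maxPowDvd H f (w ^ k))
    fun w hw => hsp.hasLengthLE_div_pow_maxPowDvd hf hM (H.pow_mem (hz w hw) k)
  rwa [prod_map_div, prod_map_pow, map_id', prod_map_pow_eq_pow_sum] at this

lemma hasLengthLE_pow_of_isFactorization_pow (hsp : IsStronglyPrimary H) (hf : f ∈ nonUnits H)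
    (hfc : f ∈ conductorH H) (hM : DvdsLongProducts H f M) {D : ℕ} {z : Multiset G}
    (hz : IsFactorization H (f ^ D) z) (hzD : 2 * card z < D) (T : ℕ) : HasLengthLE H (f ^ T) (card z * M + D * M) := by
  set v : ℕ → ℕ := fun k => (z.map fun w => maxPowDvd H f (w ^ k)).sum
  have hzH : ∀ w ∈ z, w ∈ H := fun w hw => (hz.1 w hw).1
  have hvD (k : ℕ) : v k + k ≤ D * k := by
    have hv : v k ≤ card z * (2 * k) := by
      have := sum_le_card_nsmul (z.map fun w => maxPowDvd H f (w ^ k)) (2 * k) (by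
        simp only [mem_map]
        rintro _ ⟨w, hw, rfl⟩
        exact (hz.1 w hw).maxPowDvd_pow_le hsp hf hfc k)
      rwa [card_map, smul_eq_mul] at this
    nlinarith [Nat.mul_le_mul_right k hzD]
  have hmono (k : ℕ) : v k ≤ v (k + 1) := sum_map_le_sum_map _ _ fun w hw =>
    hsp.maxPowDvd_mono hf (H.pow_mem (hzH w hw) k) (H.pow_mem (hzH w hw) (k + 1))
      (by rw [pow_succ]; exact hDvd_mul_right _ (hzH w hw))
  have hE (k : ℕ) : HasLengthLE H (f ^ (D * k - v k)) (card z * M) := by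
    refine (hsp.hasLengthLE_prod_pow_div hf hM hzH k).of_hAssoc ?_
    rw [pow_sub f (by linarith [hvD k] : v k ≤ D * k), ← div_eq_mul_inv, pow_mul]
    exact (hz.2.pow k).div_right _
  obtain ⟨k, hkT, hTk⟩ :=
    Nat.exists_le_le_add_of_step_le (E := fun k => D * k - v k) (D := D) (by simp)
    (fun k => by have := hvD k; omega)
    (fun k => by have := hmono k; have := hvD k; rw [mul_add_one]; omega) T
  obtain ⟨w, hw⟩ := hsp.exists_isFactorization hf.1
  have hfM : HasLengthLE H f M := ⟨w, hw, hw.card_le hM⟩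
  have := (hE k).mul (hfM.pow (T - (D * k - v k)))
  rw [← pow_add, Nat.add_sub_cancel' hkT] at this
  exact this.mono (by gcongr; omega)

lemma hDvd_pow_three_of_isHAtom (hsp : IsStronglyPrimary H) (hL : Lambda H (H : Set G) = ⊤)
    (hf : f ∈ nonUnits H) (hfc : f ∈ conductorH H) (hM : DvdsLongProducts H f M)
    (hu : IsHAtom H u) : HDvd H u (f ^ 3) := by
  by_contra hnd
  obtain ⟨D, hD, h₁, hh₁, h₂, hh₂, e, hnd₁, hnd₂⟩ :=
    hsp.exists_pow_eq_mul_not_hDvd hf hfc hu hnd (4 * M + 1)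
  obtain ⟨z, hz, hzM⟩ :=
    (hsp.hasLengthLE_of_not_hDvd hM hh₁ hnd₁).mul (hsp.hasLengthLE_of_not_hDvd hM hh₂ hnd₂)
  rw [← e] at hz
  obtain ⟨T, hT⟩ := hsp.exists_not_hasLengthLE_pow hL hf hM (card z * M + D * M)
  exact hT (hsp.hasLengthLE_pow_of_isFactorization_pow hf hfc hM hz (by omega) T)

end IsStronglyPrimary

lemma fdist_add_le (x v w : Multiset G) : fdist H (x + v) (x + w) ≤ max (card v) (card w) :=
  Nat.sInf_le ⟨x, x, v, w, rfl, rfl, rel_refl_of_refl_on fun _ _ => HAssoc.refl _, le_rfl⟩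

lemma IsStronglyPrimary.tameBound_of_forall_dvdsLongProducts (hsp : IsStronglyPrimary H)
    (hN : ∀ w, IsHAtom H w → DvdsLongProducts H w N) (hu : IsHAtom H u) :
    TameBound H u (N * N) := by
  classical
  rintro a - ⟨b, hb, rfl⟩ z hz
  obtain ⟨y, hyz, hyN, c, hc, hyc⟩ : ∃ y ≤ z, card y ≤ N ∧ HDvd H u y.prod := by
    by_cases hzN : N ≤ card z
    · obtain ⟨y, hyz, rfl⟩ := exists_le_card_eq hzN
      exact ⟨y, hyz, le_rfl,
        hN u hu y (fun v hv => (hz.1 v (mem_of_le hyz hv)).mem_nonUnits) le_rfl⟩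
    · exact ⟨z, le_rfl, by omega, (hDvd_mul_right u hb).trans hz.2.symm.hDvd⟩
  obtain ⟨w, hw⟩ := hsp.exists_isFactorization hc
  have hyw : IsFactorization H y.prod (u ::ₘ w) := by
    rw [hyc, ← singleton_add]
    simpa using (IsFactorization.prod (H := H) (z := {u}) (by simpa using hu)).add hw
  have hzy : ∀ v ∈ z - y, IsHAtom H v := fun v hv => hz.1 v (mem_of_le tsub_le_self hv)
  refine ⟨u ::ₘ w + (z - y), ?_, ⟨u, mem_add.2 (Or.inl (mem_cons_self u w)), HAssoc.refl u⟩, ?_⟩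
  · refine (hyw.add (IsFactorization.prod hzy)).of_hAssoc ?_
    rw [← prod_add, add_tsub_cancel_of_le hyz]
    exact hz.2
  · have hz' : z = z - y + y := (tsub_add_cancel_of_le hyz).symm
    calc fdist H z (u ::ₘ w + (z - y))
        = fdist H (z - y + y) (z - y + u ::ₘ w) := by rw [← hz', add_comm (z - y)]
      _ ≤ max (card y) (card (u ::ₘ w)) := fdist_add_le _ _ _
      _ ≤ N * N := max_le (hyN.trans (Nat.le_mul_self N))
          ((hyw.card_le (DvdsLongProducts.multiset_prod fun v hv =>
            hN v (hz.1 v (mem_of_le hyz hv)))).trans (Nat.mul_le_mul_right N hyN))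

end Monoid

theorem stmt6_general {G : Type*} [CommGroup G] (H : Submonoid G)
    (hsp : IsStronglyPrimary H) (hL : Lambda H (H : Set G) = ⊤)
    (hf : (conductorH H).Nonempty) :
    GloballyTame H := by
  obtain ⟨f, hfm, hfc⟩ := exists_mem_nonUnits_mem_conductorH hsp.1 hf
  obtain ⟨M, hM⟩ := hsp.exists_dvdsLongProducts hfm.1
  refine ⟨3 * M * (3 * M), fun u hu =>
    hsp.tameBound_of_forall_dvdsLongProducts (fun w hw => ?_) hu⟩
  exact (hM.pow 3).of_hDvd (hsp.hDvd_pow_three_of_isHAtom hL hfm hfc hM hw)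

/-- If `H` is a strongly primary monoid with `Λ(H) = ∞` and nonempty
conductor `(H : Ĥ)`, then `H` is globally tame. -/
theorem stmt6 {G : Type*} [CommGroup G] (H : Submonoid G) (hq : IsQuotientGroup H)
    (hsp : IsStronglyPrimary H) (hL : Lambda H (H : Set G) = ⊤)
    (hf : (conductorH H).Nonempty) :
    GloballyTame H :=
  stmt6_general H hsp hL hf
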